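/- arXiv:1008.2435 — 2 statements merged into one kernel-verified Lean document; each statement's English description precedes it below -/
import Mathlib

section
/- Let 𝔤_λ be a generic oscillator Lie algebra. A bivector r ∈ ⋀²𝔤_λ is a solution of the classical Yang–Baxter equation if and only if there exist u₀ ∈ S, r₀ ∈ ⋀²S, and α ∈ ℝ such that r = α e₀∧e₋₁ + e₀∧u₀ + r₀ and ω_{r₀,r₀} + α ad_{e₋₁}† r₀ = 0. -/
open Module LinearMap

noncomputable section

/-- Index type for the basis of an oscillator Lie algebra:
`Sum.inl 0 ↦ e₋₁`, `Sum.inl 1 ↦ e₀`, `Sum.inr (Sum.inl i) ↦ eᵢ`,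
`Sum.inr (Sum.inr i) ↦ ěᵢ`. -/
abbrev OscIdx (n : ℕ) := Fin 2 ⊕ (Fin n ⊕ Fin n)

/-- The oscillator Lie algebra `𝔤_λ`: a real Lie algebra `L` together with a basis
`{e₋₁, e₀, e₁, …, eₙ, ě₁, …, ěₙ}` whose nonzero brackets on basis vectors are
`[e₋₁, eⱼ] = λⱼ ěⱼ`, `[e₋₁, ěⱼ] = −λⱼ eⱼ`, `[eⱼ, ěⱼ] = e₀` (all other brackets of the
basis vectors vanish or follow by antisymmetry; in particular `e₀` is central). -/
structure OscAlg (n : ℕ) (lam : Fin n → ℝ) (L : Type) [LieRing L] [LieAlgebra ℝ L] where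
  basis : Basis (OscIdx n) ℝ L
  bracket_em_e : ∀ j, ⁅basis (Sum.inl 0), basis (Sum.inr (Sum.inl j))⁆
      = lam j • basis (Sum.inr (Sum.inr j))
  bracket_em_f : ∀ j, ⁅basis (Sum.inl 0), basis (Sum.inr (Sum.inr j))⁆
      = -lam j • basis (Sum.inr (Sum.inl j))
  bracket_e_f : ∀ i j, ⁅basis (Sum.inr (Sum.inl i)), basis (Sum.inr (Sum.inr j))⁆
      = if i = j then basis (Sum.inl 1) else 0
  bracket_e_e : ∀ i j, ⁅basis (Sum.inr (Sum.inl i)), basis (Sum.inr (Sum.inl j))⁆ = 0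
  bracket_f_f : ∀ i j, ⁅basis (Sum.inr (Sum.inr i)), basis (Sum.inr (Sum.inr j))⁆ = 0
  bracket_e0 : ∀ x : L, ⁅basis (Sum.inl 1), x⁆ = 0

/-- `0 < λ₁ ≤ … ≤ λₙ`: the standing assumption on the parameters of an oscillator
Lie algebra. -/
def OscParam {n : ℕ} (lam : Fin n → ℝ) : Prop := (∀ i, 0 < lam i) ∧ Monotone lam

/-- Genericity: `0 < λ₁ < … < λₙ` and `λ_k ≠ λ_i + λ_j` for all `i < j < k`. -/
def IsGeneric {n : ℕ} (lam : Fin n → ℝ) : Prop :=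
  (∀ i, 0 < lam i) ∧ StrictMono lam ∧
    ∀ i j k : Fin n, i < j → j < k → lam k ≠ lam i + lam j

namespace OscAlg

variable {n : ℕ} {lam : Fin n → ℝ} {L : Type} [LieRing L] [LieAlgebra ℝ L]

/-- `e₋₁`. -/
def em (B : OscAlg n lam L) : L := B.basis (Sum.inl 0)
/-- `e₀`. -/
def e0 (B : OscAlg n lam L) : L := B.basis (Sum.inl 1)
/-- `eᵢ`. -/
def e (B : OscAlg n lam L) (i : Fin n) : L := B.basis (Sum.inr (Sum.inl i))
/-- `ěᵢ`. -/
def f (B : OscAlg n lam L) (i : Fin n) : L := B.basis (Sum.inr (Sum.inr i))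
/-- `e₋₁*`, an element of the dual basis. -/
def em' (B : OscAlg n lam L) : Dual ℝ L := B.basis.coord (Sum.inl 0)
/-- `e₀*`. -/
def e0' (B : OscAlg n lam L) : Dual ℝ L := B.basis.coord (Sum.inl 1)
/-- `eᵢ*`. -/
def e' (B : OscAlg n lam L) (i : Fin n) : Dual ℝ L := B.basis.coord (Sum.inr (Sum.inl i))
/-- `ěᵢ*`. -/
def f' (B : OscAlg n lam L) (i : Fin n) : Dual ℝ L := B.basis.coord (Sum.inr (Sum.inr i))

/-- The subspace `S` spanned by the `eᵢ, ěᵢ`. -/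
def S (B : OscAlg n lam L) : Submodule ℝ L :=
  Submodule.span ℝ (Set.range B.e ∪ Set.range B.f)

/-- The `2`-form `ω` on `𝔤_λ`, viewed as a linear map `𝔤_λ → 𝔤_λ*`:
`ω(e₋₁,·) = ω(e₀,·) = 0`, `ω(eᵢ,eⱼ) = ω(ěᵢ,ěⱼ) = 0`, `ω(eᵢ,ěⱼ) = δᵢⱼ`. -/
def om (B : OscAlg n lam L) : L →ₗ[ℝ] Dual ℝ L :=
  ∑ i : Fin n, ((B.e' i).smulRight (B.f' i) - (B.f' i).smulRight (B.e' i))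

/-- The derivation `J_a` of `𝔤_λ` given by `J_a(e₋₁) = J_a(e₀) = 0`, `J_a(eᵢ) = aᵢ ěᵢ`,
`J_a(ěᵢ) = −aᵢ eᵢ`. -/
def Ja (B : OscAlg n lam L) (a : Fin n → ℝ) : L →ₗ[ℝ] L :=
  B.basis.constr ℝ (Sum.elim (fun _ => (0 : L))
    (Sum.elim (fun i => a i • B.f i) (fun i => -(a i) • B.e i)))

end OscAlg

section Bivectors

variable {L : Type} [LieRing L] [LieAlgebra ℝ L]

/-- `x ∧ y`, viewed as the linear map `𝔤* → 𝔤`, `α ↦ α(x) y − α(y) x`; this corresponds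
to the skew-symmetric bilinear form `(α,β) ↦ α(x)β(y) − α(y)β(x)` on `𝔤*`. -/
def wedge (x y : L) : Dual ℝ L →ₗ[ℝ] L :=
  (Module.Dual.eval ℝ L x).smulRight y - (Module.Dual.eval ℝ L y).smulRight x

/-- A bivector `r ∈ ⋀²𝔤`, identified with the linear map `r_# : 𝔤* → 𝔤` of the
corresponding skew-symmetric bilinear form on `𝔤*` (so `r(α,β) = β(r_#(α))`). -/
def IsBivector (r : Dual ℝ L →ₗ[ℝ] L) : Prop := ∀ α β : Dual ℝ L, α (r β) = - β (r α)

/-- The coadjoint action `ad*_u α := α ∘ ad_u`. -/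
def coad (u : L) : Dual ℝ L →ₗ[ℝ] Dual ℝ L := (LieAlgebra.ad ℝ L u).dualMap

/-- `J† r` for an endomorphism `J` of `𝔤`; in terms of bilinear forms,
`(J† r)(α,β) = r(α∘J, β) + r(α, β∘J)`. -/
def dag (J : L →ₗ[ℝ] L) (r : Dual ℝ L →ₗ[ℝ] L) : Dual ℝ L →ₗ[ℝ] L :=
  r ∘ₗ J.dualMap + J ∘ₗ r

/-- The adjoint action `ad_u† r` of `u ∈ 𝔤` on bivectors:
`(ad_u† r)(α,β) = r(ad*_u α, β) + r(α, ad*_u β)`. -/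
def adDag (u : L) (r : Dual ℝ L →ₗ[ℝ] L) : Dual ℝ L →ₗ[ℝ] L :=
  dag (LieAlgebra.ad ℝ L u) r

/-- The Schouten bracket `[r,r]` of a bivector with itself:
`[r,r](α,β,γ) = 2α([r_#β, r_#γ]) + 2β([r_#γ, r_#α]) + 2γ([r_#α, r_#β])`. -/
def schouten (r : Dual ℝ L →ₗ[ℝ] L) (α β γ : Dual ℝ L) : ℝ :=
  2 * α ⁅r β, r γ⁆ + 2 * β ⁅r γ, r α⁆ + 2 * γ ⁅r α, r β⁆

/-- `r` is a solution of the classical Yang–Baxter equation: `[r,r] = 0`. -/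
def IsCYBE (r : Dual ℝ L →ₗ[ℝ] L) : Prop := ∀ α β γ : Dual ℝ L, schouten r α β γ = 0

/-- `r` is a solution of the generalized classical Yang–Baxter equation:
`ad_u [r,r] = 0` for all `u`. -/
def IsGCYBE (r : Dual ℝ L →ₗ[ℝ] L) : Prop :=
  ∀ (u : L) (α β γ : Dual ℝ L),
    schouten r (coad u α) β γ + schouten r α (coad u β) γ + schouten r α β (coad u γ) = 0

/-- A derivation of the Lie algebra `L`. -/
def IsDerivation (J : L →ₗ[ℝ] L) : Prop := ∀ x y : L, J ⁅x, y⁆ = ⁅J x, y⁆ + ⁅x, J y⁆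

/-- The 1-cocycle condition for `ξ : 𝔤 → ⋀²𝔤` with respect to the adjoint action:
`ξ([u,v]) = ad_u† ξ(v) − ad_v† ξ(u)`. -/
def IsCocycle (ξ : L →ₗ[ℝ] (Dual ℝ L →ₗ[ℝ] L)) : Prop :=
  ∀ u v : L, ξ ⁅u, v⁆ = adDag u (ξ v) - adDag v (ξ u)

/-- The dual bracket `[α,β]*` associated to `ξ : 𝔤 → ⋀²𝔤`:
`[α,β]*(u) = ξ(u)(α,β)`. -/
def dualBr (ξ : L →ₗ[ℝ] (Dual ℝ L →ₗ[ℝ] L)) (α β : Dual ℝ L) : Dual ℝ L :=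
  (β : L →ₗ[ℝ] ℝ) ∘ₗ (ξ.flip α)

/-- `ξ : 𝔤 → ⋀²𝔤` is a Lie bialgebra structure: `ξ` takes values in bivectors, is a
1-cocycle, and the dual bracket satisfies the Jacobi identity. -/
def IsBialgebra (ξ : L →ₗ[ℝ] (Dual ℝ L →ₗ[ℝ] L)) : Prop :=
  (∀ (u : L) (α β : Dual ℝ L), α (ξ u β) = - β (ξ u α)) ∧ IsCocycle ξ ∧
  ∀ α β γ : Dual ℝ L,
    dualBr ξ (dualBr ξ α β) γ + dualBr ξ (dualBr ξ β γ) α + dualBr ξ (dualBr ξ γ α) β = 0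

end Bivectors

namespace OscAlg

variable {n : ℕ} {lam : Fin n → ℝ} {L : Type} [LieRing L] [LieAlgebra ℝ L]

/-- Membership in `⋀²S`: a bivector `r` with `r_#(e₋₁*) = r_#(e₀*) = 0` and
`Im r_# ⊆ S`. -/
def InW2S (B : OscAlg n lam L) (r : Dual ℝ L →ₗ[ℝ] L) : Prop :=
  IsBivector r ∧ r B.em' = 0 ∧ r B.e0' = 0 ∧ ∀ α : Dual ℝ L, r α ∈ B.S

/-- `ω_{r₁,r₂}(α,β) = (1/2)(ω(r₁_#(α), r₂_#(β)) + ω(r₂_#(α), r₁_#(β)))`. -/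
def omPair (B : OscAlg n lam L) (r₁ r₂ : Dual ℝ L →ₗ[ℝ] L) (α β : Dual ℝ L) : ℝ :=
  (1/2) * (B.om (r₁ α) (r₂ β) + B.om (r₂ α) (r₁ β))

end OscAlg

/-! Every bracket of `𝔤_λ` has the form
`[z, w] = e₋₁*(z) [e₋₁, w] - e₋₁*(w) [e₋₁, z] + ω(z, w) e₀`, where `[e₋₁, ·]` maps into `S`
and rotates each plane `⟨eᵢ, ěᵢ⟩` with speed `λᵢ`. Hence `[r,r](e₋₁*, eᵢ*, ěᵢ*)` is
`2λᵢ (eᵢ*(r e₋₁*)² + ěᵢ*(r e₋₁*)²)`, so for a solution `r(e₋₁*) ∈ ℝ e₀` as all `λᵢ ≠ 0`.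
This is exactly what is needed to split `r = a e₀∧e₋₁ + e₀∧u₀ + r₀` with `u₀ ∈ S`,
`r₀ ∈ ⋀²S`. For such `r` the terms in `u₀` cancel cyclically and
`[r,r] = 2 e₀ ∧ (ω_{r₀,r₀} + a ad_{e₋₁}† r₀)`. -/

section Bivectors

variable {L : Type} [LieRing L] [LieAlgebra ℝ L] {r : Dual ℝ L →ₗ[ℝ] L}

@[simp] lemma wedge_apply (x y : L) (θ : Dual ℝ L) : wedge x y θ = θ x • y - θ y • x := by
  simp [wedge]

lemma IsBivector.apply_self (hr : IsBivector r) (α : Dual ℝ L) : α (r α) = 0 := by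
  linarith [hr α α]

end Bivectors

namespace OscAlg

variable {n : ℕ} {lam : Fin n → ℝ} {L : Type} [LieRing L] [LieAlgebra ℝ L]
variable (B : OscAlg n lam L) {r r₀ : Dual ℝ L →ₗ[ℝ] L}

@[simp] lemma em'_em : B.em' B.em = 1 := by simp [em', em]
@[simp] lemma em'_e0 : B.em' B.e0 = 0 := by simp [em', e0]
@[simp] lemma em'_e (i : Fin n) : B.em' (B.e i) = 0 := by simp [em', e]
@[simp] lemma em'_f (i : Fin n) : B.em' (B.f i) = 0 := by simp [em', f]
@[simp] lemma e0'_em : B.e0' B.em = 0 := by simp [e0', em]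
@[simp] lemma e0'_e0 : B.e0' B.e0 = 1 := by simp [e0', e0]
@[simp] lemma e0'_e (i : Fin n) : B.e0' (B.e i) = 0 := by simp [e0', e]
@[simp] lemma e0'_f (i : Fin n) : B.e0' (B.f i) = 0 := by simp [e0', f]
@[simp] lemma e'_em (i : Fin n) : B.e' i B.em = 0 := by simp [e', em]
@[simp] lemma e'_e0 (i : Fin n) : B.e' i B.e0 = 0 := by simp [e', e0]
@[simp] lemma e'_e (i j : Fin n) : B.e' i (B.e j) = if j = i then 1 else 0 := by
  simp [e', e, Finsupp.single_apply]
@[simp] lemma e'_f (i j : Fin n) : B.e' i (B.f j) = 0 := by simp [e', f]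
@[simp] lemma f'_em (i : Fin n) : B.f' i B.em = 0 := by simp [f', em]
@[simp] lemma f'_e0 (i : Fin n) : B.f' i B.e0 = 0 := by simp [f', e0]
@[simp] lemma f'_e (i j : Fin n) : B.f' i (B.e j) = 0 := by simp [f', e]
@[simp] lemma f'_f (i j : Fin n) : B.f' i (B.f j) = if j = i then 1 else 0 := by
  simp [f', f, Finsupp.single_apply]

lemma eq_coord_sum (z : L) :
    z = B.em' z • B.em + B.e0' z • B.e0 + ∑ i, (B.e' i z • B.e i + B.f' i z • B.f i) := by
  have h := B.basis.sum_repr z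
  rw [Fintype.sum_sum_type, Fintype.sum_sum_type, Fin.sum_univ_two, ← Finset.sum_add_distrib] at h
  simpa only [em', e0', e', f', em, e0, e, f, Basis.coord_apply, add_assoc] using h.symm

lemma mem_S_iff {z : L} : z ∈ B.S ↔ B.em' z = 0 ∧ B.e0' z = 0 := by
  constructor
  · intro hz
    have hle : B.S ≤ LinearMap.ker B.em' ⊓ LinearMap.ker B.e0' := by
      rw [S, Submodule.span_le]
      rintro _ (⟨i, rfl⟩ | ⟨i, rfl⟩) <;> simp
    simpa using hle hz
  · rintro ⟨hm, h0⟩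
    rw [B.eq_coord_sum z, hm, h0, zero_smul, zero_smul, zero_add, zero_add]
    refine Submodule.sum_mem _ fun i _ => Submodule.add_mem _ ?_ ?_ <;>
      refine Submodule.smul_mem _ _ (Submodule.subset_span ?_)
    exacts [Or.inl ⟨i, rfl⟩, Or.inr ⟨i, rfl⟩]

@[simp] lemma lie_e0_left (x : L) : ⁅B.e0, x⁆ = 0 := B.bracket_e0 x
@[simp] lemma lie_e0_right (x : L) : ⁅x, B.e0⁆ = 0 := by rw [← lie_skew, lie_e0_left, neg_zero]

@[simp] lemma lie_e_e (i j : Fin n) : ⁅B.e i, B.e j⁆ = 0 := B.bracket_e_e i j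
@[simp] lemma lie_f_f (i j : Fin n) : ⁅B.f i, B.f j⁆ = 0 := B.bracket_f_f i j
@[simp] lemma lie_e_f (i j : Fin n) : ⁅B.e i, B.f j⁆ = if i = j then B.e0 else 0 :=
  B.bracket_e_f i j
@[simp] lemma lie_f_e (i j : Fin n) : ⁅B.f i, B.e j⁆ = -if i = j then B.e0 else 0 := by
  rw [← lie_skew, lie_e_f]; simp only [eq_comm]

lemma lie_em_eq_sum (z : L) :
    ⁅B.em, z⁆ = ∑ i, ((lam i * B.e' i z) • B.f i - (lam i * B.f' i z) • B.e i) := by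
  conv_lhs => rw [B.eq_coord_sum z]
  simp only [lie_add, lie_smul, lie_sum, lie_self, lie_e0_right, smul_zero, zero_add]
  refine Finset.sum_congr rfl fun i _ => ?_
  rw [em, e, f, B.bracket_em_e, B.bracket_em_f]
  module

@[simp] lemma em'_lie_em (z : L) : B.em' ⁅B.em, z⁆ = 0 := by simp [lie_em_eq_sum]
@[simp] lemma e0'_lie_em (z : L) : B.e0' ⁅B.em, z⁆ = 0 := by simp [lie_em_eq_sum]
@[simp] lemma e'_lie_em (i : Fin n) (z : L) : B.e' i ⁅B.em, z⁆ = -(lam i * B.f' i z) := by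
  simp [lie_em_eq_sum]
@[simp] lemma f'_lie_em (i : Fin n) (z : L) : B.f' i ⁅B.em, z⁆ = lam i * B.e' i z := by
  simp [lie_em_eq_sum]

lemma om_apply (z w : L) :
    B.om z w = ∑ i, (B.e' i z * B.f' i w - B.f' i z * B.e' i w) := by
  simp [om]

lemma om_skew (z w : L) : B.om z w = -B.om w z := by
  simp only [om_apply, ← Finset.sum_neg_distrib]
  exact Finset.sum_congr rfl fun i _ => by ring

@[simp] lemma om_em_left (w : L) : B.om B.em w = 0 := by simp [om_apply]
@[simp] lemma om_em_right (z : L) : B.om z B.em = 0 := by simp [om_apply]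
@[simp] lemma om_e0_left (w : L) : B.om B.e0 w = 0 := by simp [om_apply]
@[simp] lemma om_e0_right (z : L) : B.om z B.e0 = 0 := by simp [om_apply]
@[simp] lemma om_self (z : L) : B.om z z = 0 := by linarith [B.om_skew z z]

lemma lie_eq_em'_om (z w : L) :
    ⁅z, w⁆ = B.em' z • ⁅B.em, w⁆ - B.em' w • ⁅B.em, z⁆ + B.om z w • B.e0 := by
  let lie : L →ₗ[ℝ] L →ₗ[ℝ] L := LinearMap.mk₂ ℝ (⁅·, ·⁆) add_lie smul_lie lie_add lie_smul
  have h : lie = B.em'.smulRight (lie B.em) - (B.em'.smulRight (lie B.em)).flip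
      + B.om.compr₂ (LinearMap.toSpanSingleton ℝ L B.e0) := by
    refine LinearMap.ext_basis B.basis B.basis ?_
    have hm : B.basis (Sum.inl 0) = B.em := rfl
    have h0 : B.basis (Sum.inl 1) = B.e0 := rfl
    have he (i : Fin n) : B.basis (Sum.inr (Sum.inl i)) = B.e i := rfl
    have hf (i : Fin n) : B.basis (Sum.inr (Sum.inr i)) = B.f i := rfl
    rintro (i | i | i) (j | j | j) <;> (try fin_cases i) <;> (try fin_cases j) <;>
      simp [lie, hm, h0, he, hf, om_apply]
  simpa [lie] using LinearMap.congr_fun₂ h z w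

lemma inW2S_of_isBivector (hr : IsBivector r) (hm : r B.em' = 0) (h0 : r B.e0' = 0) :
    B.InW2S r := by
  refine ⟨hr, hm, h0, fun θ => B.mem_S_iff.2 ⟨?_, ?_⟩⟩
  · rw [hr, hm, map_zero, neg_zero]
  · rw [hr, h0, map_zero, neg_zero]

lemma schouten_em'_e'_f' (hr : IsBivector r) (i : Fin n) :
    schouten r B.em' (B.e' i) (B.f' i)
      = 2 * lam i * (B.e' i (r B.em') ^ 2 + B.f' i (r B.em') ^ 2) := by
  simp only [schouten, B.lie_eq_em'_om (r _), map_add, map_sub, map_smul, smul_eq_mul, em'_lie_em,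
    e'_lie_em, f'_lie_em, em'_e0, e'_e0, f'_e0, hr.apply_self, hr B.em' (B.e' i), hr B.em' (B.f' i)]
  ring

lemma apply_em'_eq_smul_e0_of_isCYBE (hlam : ∀ i, lam i ≠ 0) (hr : IsBivector r)
    (h : IsCYBE r) : r B.em' = B.e0' (r B.em') • B.e0 := by
  have hcoord (i : Fin n) : B.e' i (r B.em') = 0 ∧ B.f' i (r B.em') = 0 := by
    have hsum : B.e' i (r B.em') ^ 2 + B.f' i (r B.em') ^ 2 = 0 := by
      have hsq := h B.em' (B.e' i) (B.f' i)
      rw [B.schouten_em'_e'_f' hr] at hsq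
      simpa [hlam i] using hsq
    rw [add_eq_zero_iff_of_nonneg (sq_nonneg _) (sq_nonneg _)] at hsum
    simpa using hsum
  conv_lhs => rw [B.eq_coord_sum (r B.em')]
  simp [hr.apply_self, hcoord]

lemma exists_eq_wedge_add (hr : IsBivector r) (h : r B.em' = B.e0' (r B.em') • B.e0) :
    ∃ (u : L) (r₀ : Dual ℝ L →ₗ[ℝ] L) (a : ℝ), u ∈ B.S ∧ B.InW2S r₀ ∧
      r = a • wedge B.e0 B.em + wedge B.e0 u + r₀ := by
  set a := B.em' (r B.e0') with ha_def
  set u := r B.e0' - a • B.em with hu_def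
  have hu : u ∈ B.S := B.mem_S_iff.2 ⟨by simp [hu_def, ha_def], by simp [hu_def, hr.apply_self]⟩
  have hmu : B.em' u = 0 := (B.mem_S_iff.1 hu).1
  have ha : B.e0' (r B.em') = -a := by rw [hr]
  refine ⟨u, r - a • wedge B.e0 B.em - wedge B.e0 u, a, hu,
    B.inW2S_of_isBivector ?_ ?_ ?_, by abel⟩
  · intro φ ψ
    simp only [LinearMap.sub_apply, LinearMap.smul_apply, wedge_apply, map_sub, map_smul,
      smul_eq_mul, hr φ ψ]
    ring
  · simp only [LinearMap.sub_apply, LinearMap.smul_apply, wedge_apply, em'_em, em'_e0, hmu]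
    rw [h, ha]
    module
  · simp [hu_def, hr.apply_self]

def reducedCYBE (a : ℝ) (r₀ : Dual ℝ L →ₗ[ℝ] L) (α β : Dual ℝ L) : ℝ :=
  B.omPair r₀ r₀ α β + a * β (adDag B.em r₀ α)

lemma reducedCYBE_eq (a : ℝ) (hr₀ : IsBivector r₀) (α β : Dual ℝ L) :
    B.reducedCYBE a r₀ α β
      = B.om (r₀ α) (r₀ β) + a * (β ⁅B.em, r₀ α⁆ - α ⁅B.em, r₀ β⁆) := by
  simp only [reducedCYBE, omPair, adDag, dag, LinearMap.add_apply, LinearMap.comp_apply,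
    map_add, hr₀ β, LinearMap.dualMap_apply, LieAlgebra.ad_apply]
  ring

lemma lie_wedge_add_apply (a : ℝ) {u : L} (hu : u ∈ B.S) (hr₀ : ∀ θ, r₀ θ ∈ B.S)
    (ε ζ : Dual ℝ L) :
    ⁅(a • wedge B.e0 B.em + wedge B.e0 u + r₀) ε, (a • wedge B.e0 B.em + wedge B.e0 u + r₀) ζ⁆
      = (a * ε B.e0) • ⁅B.em, r₀ ζ⁆ - (a * ζ B.e0) • ⁅B.em, r₀ ε⁆
        + (ε B.e0 * B.om u (r₀ ζ) - ζ B.e0 * B.om u (r₀ ε) + B.om (r₀ ε) (r₀ ζ)) • B.e0 := by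
  have hmu : B.em' u = 0 := (B.mem_S_iff.1 hu).1
  have hmr (θ : Dual ℝ L) : B.em' (r₀ θ) = 0 := (B.mem_S_iff.1 (hr₀ θ)).1
  rw [B.lie_eq_em'_om]
  simp only [LinearMap.add_apply, LinearMap.smul_apply, wedge_apply, map_add, map_sub, map_smul,
    smul_eq_mul, lie_add, lie_sub, lie_smul, lie_self, lie_e0_right, em'_em, em'_e0, hmu, hmr,
    LinearMap.sub_apply, om_em_left, om_em_right, om_e0_left, om_e0_right, om_self,
    B.om_skew (r₀ ε) u]
  module

lemma schouten_wedge_add (a : ℝ) {u : L} (hu : u ∈ B.S) (hr₀ : B.InW2S r₀)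
    (α β γ : Dual ℝ L) :
    schouten (a • wedge B.e0 B.em + wedge B.e0 u + r₀) α β γ
      = 2 * (α B.e0 * B.reducedCYBE a r₀ β γ + β B.e0 * B.reducedCYBE a r₀ γ α
        + γ B.e0 * B.reducedCYBE a r₀ α β) := by
  obtain ⟨hbiv, -, -, hS⟩ := hr₀
  simp only [schouten, B.lie_wedge_add_apply a hu hS, B.reducedCYBE_eq a hbiv, map_add,
    map_sub, map_smul, smul_eq_mul]
  ring

lemma schouten_wedge_add_e0' (a : ℝ) {u : L} (hu : u ∈ B.S) (hr₀ : B.InW2S r₀)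
    (α β : Dual ℝ L) :
    schouten (a • wedge B.e0 B.em + wedge B.e0 u + r₀) B.e0' α β
      = 2 * B.reducedCYBE a r₀ α β := by
  rw [B.schouten_wedge_add a hu hr₀]
  simp [B.reducedCYBE_eq a hr₀.1, hr₀.2.2.1]

end OscAlg

theorem oscillator_yang_baxter_classification_general
    {n : ℕ} {lam : Fin n → ℝ} (hgen : IsGeneric lam)
    {L : Type} [LieRing L] [LieAlgebra ℝ L] (B : OscAlg n lam L)
    (r : Dual ℝ L →ₗ[ℝ] L) (hr : IsBivector r) :
    IsCYBE r ↔
      ∃ (u₀ : L) (r₀ : Dual ℝ L →ₗ[ℝ] L) (a : ℝ),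
        u₀ ∈ B.S ∧ B.InW2S r₀ ∧
        r = a • wedge B.e0 B.em + wedge B.e0 u₀ + r₀ ∧
        ∀ α β : Dual ℝ L,
          B.omPair r₀ r₀ α β + a * β (adDag B.em r₀ α) = 0 := by
  constructor
  · intro hcybe
    have hlam (i : Fin n) : lam i ≠ 0 := (hgen.1 i).ne'
    obtain ⟨u, r₀, a, hu, hr₀, rfl⟩ :=
      B.exists_eq_wedge_add hr (B.apply_em'_eq_smul_e0_of_isCYBE hlam hr hcybe)
    refine ⟨u, r₀, a, hu, hr₀, rfl, fun α β => ?_⟩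
    have h := hcybe B.e0' α β
    rw [B.schouten_wedge_add_e0' a hu hr₀] at h
    simpa [OscAlg.reducedCYBE] using h
  · rintro ⟨u, r₀, a, hu, hr₀, rfl, h⟩ α β γ
    rw [B.schouten_wedge_add a hu hr₀]
    simp [OscAlg.reducedCYBE, h]

/-- **Theorem (Yang–Baxter solutions on generic oscillator algebras).**
A bivector `r ∈ ⋀²𝔤_λ` on a generic oscillator Lie algebra is a solution of the
classical Yang–Baxter equation if and only if there exist `u₀ ∈ S`, `r₀ ∈ ⋀²S` and
`α ∈ ℝ` such that `r = α e₀∧e₋₁ + e₀∧u₀ + r₀` and `ω_{r₀,r₀} + α ad_{e₋₁}† r₀ = 0`. -/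
theorem oscillator_yang_baxter_classification
    {n : ℕ} (hn : 0 < n) {lam : Fin n → ℝ} (hgen : IsGeneric lam)
    {L : Type} [LieRing L] [LieAlgebra ℝ L] (B : OscAlg n lam L)
    (r : Dual ℝ L →ₗ[ℝ] L) (hr : IsBivector r) :
    IsCYBE r ↔
      ∃ (u₀ : L) (r₀ : Dual ℝ L →ₗ[ℝ] L) (a : ℝ),
        u₀ ∈ B.S ∧ B.InW2S r₀ ∧
        r = a • wedge B.e0 B.em + wedge B.e0 u₀ + r₀ ∧
        ∀ α β : Dual ℝ L,
          B.omPair r₀ r₀ α β + a * β (adDag B.em r₀ α) = 0 :=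
  oscillator_yang_baxter_classification_general hgen B r hr
end
end

section
/- Let (𝔤, ⟨·,·⟩) be an orthogonal Lie algebra and let r ∈ ⋀²𝔤 be a solution of the generalized classical Yang–Baxter equation. Then the curvature R of ∇ is parallel: for all α, β, γ, ρ ∈ 𝔤*, (∇_ρ R)(α,β)γ := ∇_ρ(R(α,β)γ) − R(∇_ρ α, β)γ − R(α, ∇_ρ β)γ − R(α,β)(∇_ρ γ) = 0. -/
open Module LinearMap

noncomputable section

section Orthogonal

variable {L : Type} [LieRing L] [LieAlgebra ℝ L]

/-- The dual bracket `[α,β]_r := ad*_{r_#(β)} α − ad*_{r_#(α)} β` on `𝔤*` associated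
to a solution `r` of the (generalized) classical Yang–Baxter equation. -/
def rBr (r : Dual ℝ L →ₗ[ℝ] L) (α β : Dual ℝ L) : Dual ℝ L :=
  coad (r β) α - coad (r α) β

/-- The left-invariant connection `∇_α β := −ad*_{r_#(α)} β` on the dual Lie group. -/
def nabla (r : Dual ℝ L →ₗ[ℝ] L) (α β : Dual ℝ L) : Dual ℝ L :=
  -(coad (r α) β)

/-- The curvature `R(α,β)γ := ∇_{[α,β]_r} γ − ∇_α ∇_β γ + ∇_β ∇_α γ` of `∇`. -/
def curv (r : Dual ℝ L →ₗ[ℝ] L) (α β γ : Dual ℝ L) : Dual ℝ L :=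
  nabla r (rBr r α β) γ - nabla r α (nabla r β γ) + nabla r β (nabla r α γ)

end Orthogonal

/-! Write `K(α,β) := [r_#α, r_#β] − r_#[α,β]_r`. Skew-symmetry of `r` gives
`γ(K(α,β)) = ½[r,r](α,β,γ)`, and unwinding the definitions gives `R(α,β) = ad*_{K(α,β)}`.
Hence `(∇_ρ R)(α,β) = ad*_W` with `W = [r_#ρ, K(α,β)] + K(ad*_{r_#ρ}α, β) + K(α, ad*_{r_#ρ}β)`,
and `δ(W)` is, up to the factor `½`, the generalized Yang–Baxter expression
`ad_{r_#ρ}[r,r](α,β,δ)`, which vanishes; since `𝔤*` separates points, `W = 0`. -/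

section CurvatureOfDualConnection

variable {L : Type} [LieRing L] [LieAlgebra ℝ L]

@[simp]
lemma coad_apply (u : L) (α : Dual ℝ L) (v : L) : coad u α v = α ⁅u, v⁆ := rfl

@[simp]
lemma coad_zero : coad (0 : L) = 0 := by
  ext
  simp

@[simp]
lemma coad_neg (u : L) : coad (-u) = -coad u := by
  ext
  simp only [coad_apply, neg_lie, map_neg, LinearMap.neg_apply]

@[simp]
lemma coad_add (u v : L) : coad (u + v) = coad u + coad v := by
  ext
  simp [add_lie]

@[simp]
lemma coad_sub (u v : L) : coad (u - v) = coad u - coad v := by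
  ext
  simp [sub_lie]

lemma coad_lie (u v : L) (α : Dual ℝ L) :
    coad ⁅u, v⁆ α = coad v (coad u α) - coad u (coad v α) := by
  ext
  simp [lie_lie]

/-- `K(α,β)`: the failure of `r_#` to map `[·,·]_r` to the bracket of `𝔤`. -/
def rDefect (r : Dual ℝ L →ₗ[ℝ] L) (α β : Dual ℝ L) : L :=
  ⁅r α, r β⁆ - r (rBr r α β)

variable {r : Dual ℝ L →ₗ[ℝ] L}

lemma rDefect_neg_left (α β : Dual ℝ L) : rDefect r (-α) β = -rDefect r α β := by
  simp only [rDefect, rBr, map_neg, map_sub, coad_neg, LinearMap.neg_apply, neg_lie]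
  abel

lemma rDefect_neg_right (α β : Dual ℝ L) : rDefect r α (-β) = -rDefect r α β := by
  simp only [rDefect, rBr, map_neg, map_sub, coad_neg, LinearMap.neg_apply, lie_neg]
  abel

lemma apply_rDefect (hr : IsBivector r) (α β γ : Dual ℝ L) :
    γ (rDefect r α β) = schouten r α β γ / 2 := by
  have hrBr : γ (r (rBr r α β)) = -(α ⁅r β, r γ⁆ - β ⁅r α, r γ⁆) := by
    rw [hr]
    simp [rBr]
  rw [rDefect, map_sub, hrBr, schouten, ← lie_skew (r γ) (r α), map_neg]
  ring

lemma curv_eq_coad_rDefect (α β γ : Dual ℝ L) :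
    curv r α β γ = coad (rDefect r α β) γ := by
  simp only [curv, nabla, rDefect, map_neg, neg_neg, coad_sub, coad_lie, LinearMap.sub_apply]
  abel

lemma nabla_curv_sub_eq_coad (ρ α β γ : Dual ℝ L) :
    nabla r ρ (curv r α β γ) - curv r (nabla r ρ α) β γ
        - curv r α (nabla r ρ β) γ - curv r α β (nabla r ρ γ)
      = coad (⁅r ρ, rDefect r α β⁆ + rDefect r (coad (r ρ) α) β
          + rDefect r α (coad (r ρ) β)) γ := by
  simp only [curv_eq_coad_rDefect, nabla, rDefect_neg_left, rDefect_neg_right, map_neg,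
    coad_add, coad_neg, coad_lie, LinearMap.add_apply, LinearMap.neg_apply]
  abel

lemma IsGCYBE.rDefect_equivariant (hr : IsBivector r) (hgybe : IsGCYBE r) (u : L)
    (α β : Dual ℝ L) :
    ⁅u, rDefect r α β⁆ + rDefect r (coad u α) β + rDefect r α (coad u β) = 0 := by
  refine (Module.forall_dual_apply_eq_zero_iff ℝ _).mp fun δ => ?_
  rw [map_add, map_add, ← coad_apply, apply_rDefect hr, apply_rDefect hr, apply_rDefect hr]
  linarith [hgybe u α β δ]

end CurvatureOfDualConnection

theorem orthogonal_gybe_curvature_parallel_general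
    {L : Type} [LieRing L] [LieAlgebra ℝ L]
    (r : Dual ℝ L →ₗ[ℝ] L) (hr : IsBivector r) (hgybe : IsGCYBE r) :
    ∀ ρ α β γ : Dual ℝ L,
      nabla r ρ (curv r α β γ) - curv r (nabla r ρ α) β γ
        - curv r α (nabla r ρ β) γ - curv r α β (nabla r ρ γ) = 0 := by
  intro ρ α β γ
  rw [nabla_curv_sub_eq_coad, hgybe.rDefect_equivariant hr, coad_zero, LinearMap.zero_apply]

/-- **Theorem (local symmetry).** Let `(𝔤, ⟨·,·⟩)` be an orthogonal Lie algebra and `r`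
a solution of the generalized classical Yang–Baxter equation.  Then the curvature `R`
of the connection `∇_α β = −ad*_{r_#(α)} β` is parallel: `∇R = 0`. -/
theorem orthogonal_gybe_curvature_parallel
    {L : Type} [LieRing L] [LieAlgebra ℝ L]
    (k : L →ₗ[ℝ] Dual ℝ L)
    (hsym : ∀ u v : L, k u v = k v u)
    (hinv : ∀ u v w : L, k ⁅u, v⁆ w + k v ⁅u, w⁆ = 0)
    (φ : L ≃ₗ[ℝ] Dual ℝ L) (hφ : ∀ u : L, (φ u : Dual ℝ L) = k u)
    (r : Dual ℝ L →ₗ[ℝ] L) (hr : IsBivector r) (hgybe : IsGCYBE r) :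
    ∀ ρ α β γ : Dual ℝ L,
      nabla r ρ (curv r α β γ) - curv r (nabla r ρ α) β γ
        - curv r α (nabla r ρ β) γ - curv r α β (nabla r ρ γ) = 0 :=
  orthogonal_gybe_curvature_parallel_general r hr hgybe
end
end
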